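/- arXiv:2305.13319 — 2 statements merged into one kernel-verified Lean document; each statement's English description precedes it below -/
import Mathlib

section
/- Let R be a left near-field. Then the set D(R) of distributive elements, with the addition and multiplication inherited from R, forms a division ring (skew field). In particular 1 ∈ D(R), D(R) is an additive subgroup, closed under multiplication and inverses of nonzero elements, and both distributive laws hold on D(R). -/
/-- In a left near-field `R`, the set `D(R)` of distributive elements is a division ring:
it contains `1` and `0`, is an additive subgroup, is closed under multiplication and
inverses of nonzero elements, and both distributive laws hold on it. -/
theorem distributive_elements_division_ring
    (R : Type*) [AddCommGroup R] [Monoid R] [Inv R]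
    (hone : (1 : R) ≠ 0)
    (hd : ∀ a b c : R, a * (b + c) = a * b + a * c)
    (hinv : ∀ x : R, x ≠ 0 → x * x⁻¹ = 1 ∧ x⁻¹ * x = 1) :
    let D : Set R := {x : R | ∀ y z : R, (y + z) * x = y * x + z * x}
    (1 : R) ∈ D ∧ (0 : R) ∈ D ∧
    (∀ x ∈ D, ∀ y ∈ D, x + y ∈ D) ∧
    (∀ x ∈ D, -x ∈ D) ∧
    (∀ x ∈ D, ∀ y ∈ D, x * y ∈ D) ∧
    (∀ x ∈ D, x ≠ 0 → x⁻¹ ∈ D) ∧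
    (∀ x ∈ D, ∀ y ∈ D, ∀ z ∈ D, (x + y) * z = x * z + y * z ∧ x * (y + z) = x * y + x * z) := by
  intro D
  -- a * 0 = 0
  have hz : ∀ a : R, a * 0 = 0 := by
    intro a
    have := hd a 0 0
    rw [add_zero] at this
    nth_rewrite 1 [← add_zero (a * 0)] at this
    exact (add_left_cancel this).symm
  -- a * (-b) = -(a * b)
  have hneg : ∀ a b : R, a * (-b) = -(a * b) := by
    intro a b
    have := hd a b (-b)
    rw [add_neg_cancel, hz] at this
    exact eq_neg_of_add_eq_zero_right (add_comm (a * b) (a * -b) ▸ this.symm)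
  refine ⟨?_, ?_, ?_, ?_, ?_, ?_, ?_⟩
  · intro y z; simp
  · intro y z; simp [hz]
  · intro x hx y hy u v
    rw [hd, hd, hd, hx, hy]; abel
  · intro x hx y z
    rw [hneg, hneg, hneg, hx]; abel
  · intro x hx y hy u v
    rw [← mul_assoc, ← mul_assoc, ← mul_assoc, hx, hy]
  · intro x hx hx0 y z
    have h1 := (hinv x hx0).1
    have h2 := (hinv x hx0).2
    have key : ((y + z) * x⁻¹) * x = (y * x⁻¹ + z * x⁻¹) * x := by
      rw [hx, mul_assoc, mul_assoc, mul_assoc, h2, mul_one, mul_one, mul_one]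
    calc (y + z) * x⁻¹ = (((y + z) * x⁻¹) * x) * x⁻¹ := by
            rw [mul_assoc, h1, mul_one]
      _ = ((y * x⁻¹ + z * x⁻¹) * x) * x⁻¹ := by rw [key]
      _ = y * x⁻¹ + z * x⁻¹ := by rw [mul_assoc, h1, mul_one]
  · intro x hx y hy z hz'
    exact ⟨hz' x y, hd x y z⟩
end

section
/- Let (q, n) be a Dickson pair, i.e., q = p^l is a prime power, every prime divisor of n divides q − 1, and q ≡ 3 (mod 4) implies 4 ∤ n. Then n divides [n]_q := (q^n − 1)/(q − 1). -/
private lemma geom_split (q r : ℕ) : ∀ m : ℕ,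
    ∑ i ∈ Finset.range (m * r), q ^ i =
      (∑ i ∈ Finset.range m, (q ^ r) ^ i) * ∑ j ∈ Finset.range r, q ^ j := by
  intro m
  induction m with
  | zero => simp
  | succ m ih =>
    rw [Nat.succ_mul, Finset.sum_range_add, ih, Finset.sum_range_succ, add_mul]
    congr 1
    rw [Finset.mul_sum]
    refine Finset.sum_congr rfl fun j _ => ?_
    rw [pow_add, ← pow_mul, mul_comm m r]

private lemma geom_mul (q n : ℕ) (hq : 1 ≤ q) :
    (q - 1) * ∑ i ∈ Finset.range n, q ^ i = q ^ n - 1 := by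
  have h1 : 1 ≤ q ^ n := Nat.one_le_pow _ _ hq
  zify [hq, h1]
  have := geom_sum_mul (q : ℤ) n
  push_cast at this ⊢
  linarith

private lemma prime_dvd_geom (q r : ℕ) (hq : 2 ≤ q) (hr : r ∣ q - 1) :
    r ∣ ∑ j ∈ Finset.range r, q ^ j := by
  rcases Nat.eq_zero_or_pos r with h | h
  · subst h; simp
  have hq1 : (q : ZMod r) = 1 := by
    have : q = (q - 1) + 1 := by omega
    rw [this]
    push_cast
    obtain ⟨c, hc⟩ := hr
    simp [hc]
  rw [← ZMod.natCast_eq_zero_iff]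
  push_cast
  simp [hq1, ZMod.natCast_self]

private lemma aux : ∀ n : ℕ, ∀ q : ℕ, 2 ≤ q →
    (∀ r : ℕ, r.Prime → r ∣ n → r ∣ q - 1) →
    n ∣ ∑ i ∈ Finset.range n, q ^ i := by
  intro n
  induction n using Nat.strong_induction_on with
  | _ n ih =>
    intro q hq hdiv
    rcases Nat.lt_or_ge n 2 with h | h
    · interval_cases n <;> simp
    · set r := n.minFac with hr
      have hrp : r.Prime := Nat.minFac_prime (by omega)
      have hrn : r ∣ n := Nat.minFac_dvd n
      set m := n / r with hm
      have hnm : m * r = n := Nat.div_mul_cancel hrn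
      have hmlt : m < n := by
        apply Nat.div_lt_self (by omega) hrp.one_lt
      have hq1 : 1 ≤ q := by omega
      have hqr : 2 ≤ q ^ r := by
        calc 2 ≤ q := hq
        _ = q ^ 1 := (pow_one q).symm
        _ ≤ q ^ r := Nat.pow_le_pow_right (by omega) hrp.one_le
      have hdiv' : ∀ s : ℕ, s.Prime → s ∣ m → s ∣ q ^ r - 1 := by
        intro s hs hsm
        have : s ∣ q - 1 := hdiv s hs (hsm.trans (Nat.div_dvd_of_dvd hrn))
        exact this.trans (by simpa using Nat.sub_dvd_pow_sub_pow q 1 r)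
      have h1 : m ∣ ∑ i ∈ Finset.range m, (q ^ r) ^ i := ih m hmlt _ hqr hdiv'
      have h2 : r ∣ ∑ j ∈ Finset.range r, q ^ j :=
        prime_dvd_geom q r hq (hdiv r hrp hrn)
      rw [← hnm, geom_split]
      exact mul_dvd_mul h1 h2

/-- For a Dickson pair `(q, n)`, `n` divides `[n]_q = (q^n - 1)/(q - 1)`. -/
theorem dickson_pair_dvd
    (p l q n : ℕ) (hp : p.Prime) (hl : 1 ≤ l) (hq : q = p ^ l) (hn : 1 ≤ n)
    (hdiv : ∀ r : ℕ, r.Prime → r ∣ n → r ∣ q - 1)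
    (h4 : q % 4 = 3 → ¬ (4 ∣ n)) :
    n ∣ (q ^ n - 1) / (q - 1) := by
  have hq2 : 2 ≤ q := by
    subst hq
    calc 2 ≤ p := hp.two_le
    _ = p ^ 1 := (pow_one p).symm
    _ ≤ p ^ l := Nat.pow_le_pow_right hp.pos hl
  have key : (q ^ n - 1) / (q - 1) = ∑ i ∈ Finset.range n, q ^ i := by
    rw [← geom_mul q n (by omega)]
    exact Nat.mul_div_cancel_left _ (by omega)
  rw [key]
  exact aux n q hq2 hdiv
end
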